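/- Let X, Y be finite sets, Θ compact, p(x,y|θ) continuous in θ. Then the minimax value of the KL prediction problem equals the maximal conditional mutual information: inf_q sup_{θ∈Θ} Σ_{x,y} p(x,y|θ) log(p(y|x,θ)/q(y;x)) = sup_{π∈P} I_{θ,y|x}(π), where the infimum is over all predictive densities q. -/

import Mathlib

open MeasureTheory

noncomputable def negEnt (u : ℝ) : ℝ := u * Real.log u

noncomputable def pMix {Θ X Y : Type*} [MeasurableSpace Θ]
    (p : X → Y → Θ → ℝ) (π : ProbabilityMeasure Θ) (x : X) (y : Y) : ℝ :=
  ∫ θ, p x y θ ∂(π : Measure Θ)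

noncomputable def condMutualInfo {Θ X Y : Type*} [MeasurableSpace Θ] [Fintype X] [Fintype Y]
    (p : X → Y → Θ → ℝ) (π : ProbabilityMeasure Θ) : ℝ :=
  (∫ θ, ∑ x : X, ∑ y : Y, negEnt (p x y θ) ∂(π : Measure Θ))
    - ∑ x : X, ∑ y : Y, negEnt (pMix p π x y)
    - (∫ θ, ∑ x : X, negEnt (∑ y : Y, p x y θ) ∂(π : Measure Θ))
    + ∑ x : X, negEnt (∑ y : Y, pMix p π x y)

def IsPredDensity {X Y : Type*} [Fintype Y] (q : X → Y → ℝ) : Prop :=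
  (∀ x y, 0 ≤ q x y ∧ q x y ≤ 1) ∧ ∀ x, ∑ y : Y, q x y = 1

noncomputable def klTerm (a b c : ℝ) : EReal :=
  if a = 0 then 0 else if c = 0 then ⊤ else ((a * Real.log (b / c) : ℝ) : EReal)

noncomputable def risk {Θ X Y : Type*} [Fintype X] [Fintype Y]
    (p : X → Y → Θ → ℝ) (q : X → Y → ℝ) (θ : Θ) : EReal :=
  ∑ x : X, ∑ y : Y, klTerm (p x y θ) (p x y θ / ∑ y' : Y, p x y' θ) (q x y)

/-!
A parameter `θ` is encoded by the point `riskPoint p θ = (-H(y|x,θ), p(·,·|θ))` of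
`ℝ × (X → Y → ℝ)`. For a predictive density `q` the risk is the affine function
`klPayoff q z = z.1 - ∑ z.2 log q` of this point, and averaging the points under `π` gives
`mixRiskPoint p π`. By Gibbs' inequality `inf_q klPayoff q z` is the Bayes risk
`z.1 + H(y|x)`, which at `mixRiskPoint p π` is `I_{θ,y|x}(π)`; this gives
`sup_π I ≤ inf_q sup_θ R`.

Conversely, on densities bounded below by `ε > 0` the payoff is continuous and convex in `q`
and affine in `z`, so Sion's minimax theorem applies on these densities against the convex
hull of the points `riskPoint p θ`. Every point of that hull is `mixRiskPoint p π` for a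
discrete `π`, and mixing the Bayes predictive density with weight `1 - e^{-δ}` of the
uniform one keeps it above `ε = (1 - e^{-δ}) / |Y|` at a cost of at most `δ`.
-/

open Finset
open Real (log exp)

theorem EReal.coe_finsetSum {ι : Type*} (s : Finset ι) (f : ι → ℝ) :
    ((∑ i ∈ s, f i : ℝ) : EReal) = ∑ i ∈ s, (f i : EReal) :=
  map_sum (⟨⟨Real.toEReal, EReal.coe_zero⟩, EReal.coe_add⟩ : ℝ →+ EReal) f s

theorem EReal.sum_ne_bot {ι : Type*} {s : Finset ι} {f : ι → EReal}
    (hbot : ∀ i ∈ s, f i ≠ ⊥) : ∑ i ∈ s, f i ≠ ⊥ :=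
  Finset.sum_induction f (· ≠ ⊥) (fun _ _ ha hb => EReal.add_ne_bot_iff.mpr ⟨ha, hb⟩)
    EReal.zero_ne_bot hbot

theorem EReal.sum_eq_top_of_ne_bot {ι : Type*} {s : Finset ι} {f : ι → EReal}
    (hbot : ∀ i ∈ s, f i ≠ ⊥) {i : ι} (hi : i ∈ s) (htop : f i = ⊤) :
    ∑ j ∈ s, f j = ⊤ := by
  classical
  rw [← Finset.add_sum_erase s f hi, htop,
    EReal.top_add_of_ne_bot (EReal.sum_ne_bot fun j hj => hbot j (Finset.mem_of_mem_erase hj))]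

/-- Gibbs' inequality. -/
theorem sum_mul_log_add_negEnt_sum_le {ι : Type*} [Fintype ι] {u w : ι → ℝ}
    (hu : ∀ i, 0 ≤ u i) (hw : ∀ i, 0 ≤ w i) (hw1 : ∑ i, w i ≤ 1)
    (hpos : ∀ i, 0 < u i → 0 < w i) :
    ∑ i, u i * log (w i) + negEnt (∑ i, u i) ≤ ∑ i, negEnt (u i) := by
  set S := ∑ i, u i
  have hS : 0 ≤ S := sum_nonneg fun i _ => hu i
  have hterm : ∀ i, u i * log (w i) + u i * log S ≤ negEnt (u i) + (S * w i - u i) := by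
    intro i
    rcases (hu i).eq_or_lt with h0 | h0
    · simp [← h0, negEnt, mul_nonneg hS (hw i)]
    · have hSpos : 0 < S := h0.trans_le (single_le_sum (fun j _ => hu j) (mem_univ i))
      have hwi := hpos i h0
      have hlog := Real.log_le_sub_one_of_pos (div_pos (mul_pos hSpos hwi) h0)
      rw [Real.log_div (by positivity) h0.ne', Real.log_mul hSpos.ne' hwi.ne'] at hlog
      have hmul := mul_le_mul_of_nonneg_left hlog (hu i)
      have hrhs : u i * (S * w i / u i - 1) = S * w i - u i := by field_simp
      simp only [negEnt]
      linarith
  calc ∑ i, u i * log (w i) + negEnt S = ∑ i, (u i * log (w i) + u i * log S) := by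
        rw [sum_add_distrib, ← sum_mul]; rfl
    _ ≤ ∑ i, (negEnt (u i) + (S * w i - u i)) := sum_le_sum fun i _ => hterm i
    _ = ∑ i, negEnt (u i) + S * (∑ i, w i - 1) := by
        rw [sum_add_distrib, sum_sub_distrib, mul_sub, mul_sum, mul_one]
    _ ≤ ∑ i, negEnt (u i) := by nlinarith

theorem sum_mul_log_div_sum {ι : Type*} [Fintype ι] {u : ι → ℝ} (hu : ∀ i, 0 ≤ u i) :
    ∑ i, u i * log (u i / ∑ j, u j) = ∑ i, negEnt (u i) - negEnt (∑ i, u i) := by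
  have hterm : ∀ i, u i * log (u i / ∑ j, u j) = negEnt (u i) - u i * log (∑ j, u j) := by
    intro i
    rcases (hu i).eq_or_lt with h0 | h0
    · simp [← h0, negEnt]
    · have hS : 0 < ∑ j, u j := h0.trans_le (single_le_sum (fun j _ => hu j) (mem_univ i))
      rw [Real.log_div h0.ne' hS.ne', negEnt]
      ring
  rw [sum_congr rfl fun i _ => hterm i, sum_sub_distrib, ← sum_mul]
  rfl

@[fun_prop]
theorem continuous_negEnt : Continuous negEnt := Real.continuous_mul_log

section Payoff

variable {X Y : Type*} [Fintype Y]

noncomputable def condEntropy [Fintype X] (m : X → Y → ℝ) : ℝ :=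
  ∑ x, negEnt (∑ y, m x y) - ∑ x, ∑ y, negEnt (m x y)

noncomputable def klPayoff [Fintype X] (q : X → Y → ℝ) (z : ℝ × (X → Y → ℝ)) : ℝ :=
  z.1 - ∑ x, ∑ y, z.2 x y * log (q x y)

noncomputable def bayesRisk [Fintype X] (z : ℝ × (X → Y → ℝ)) : ℝ :=
  z.1 + condEntropy z.2

noncomputable def uniformDensity : X → Y → ℝ := fun _ _ => (Fintype.card Y : ℝ)⁻¹

noncomputable def condDensity (m : X → Y → ℝ) : X → Y → ℝ := fun x y =>
  if ∑ y', m x y' = 0 then uniformDensity x y else m x y / ∑ y', m x y'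

def densitiesGe (ε : ℝ) : Set (X → Y → ℝ) :=
  {q | (∀ x y, ε ≤ q x y) ∧ ∀ x, ∑ y, q x y = 1}

theorem bayesRisk_le_klPayoff [Fintype X] {z : ℝ × (X → Y → ℝ)} {q : X → Y → ℝ}
    (hz : ∀ x y, 0 ≤ z.2 x y) (hq : ∀ x y, 0 ≤ q x y) (hq1 : ∀ x, ∑ y, q x y ≤ 1)
    (hpos : ∀ x y, 0 < z.2 x y → 0 < q x y) :
    bayesRisk z ≤ klPayoff q z := by
  have hrows := sum_le_sum fun x (_ : x ∈ univ) =>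
    sum_mul_log_add_negEnt_sum_le (hz x) (hq x) (hq1 x) (hpos x)
  simp only [bayesRisk, klPayoff, condEntropy, sum_add_distrib] at hrows ⊢
  linarith

theorem sum_uniformDensity [Nonempty Y] (x : X) : ∑ y : Y, uniformDensity x y = 1 := by
  simp [uniformDensity]

theorem uniformDensity_pos [Nonempty Y] {x : X} {y : Y} : 0 < uniformDensity x y := by
  unfold uniformDensity
  positivity

theorem condDensity_nonneg {m : X → Y → ℝ} (hm : ∀ x y, 0 ≤ m x y) (x : X) (y : Y) :
    0 ≤ condDensity m x y := by
  unfold condDensity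
  split_ifs
  · exact inv_nonneg.2 (Nat.cast_nonneg _)
  · exact div_nonneg (hm x y) (sum_nonneg fun y' _ => hm x y')

theorem condDensity_pos {m : X → Y → ℝ} (hm : ∀ x y, 0 ≤ m x y) {x : X} {y : Y}
    (hxy : 0 < m x y) : 0 < condDensity m x y := by
  have hS : 0 < ∑ y', m x y' := hxy.trans_le (single_le_sum (fun y' _ => hm x y') (mem_univ y))
  rw [condDensity, if_neg hS.ne']
  exact div_pos hxy hS

theorem sum_condDensity [Nonempty Y] {m : X → Y → ℝ} (x : X) :
    ∑ y, condDensity m x y = 1 := by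
  by_cases hS : ∑ y', m x y' = 0
  · simp only [condDensity, hS, if_true, sum_uniformDensity]
  · simp only [condDensity, if_neg hS, ← sum_div, div_self hS]

theorem klPayoff_condDensity [Fintype X] {z : ℝ × (X → Y → ℝ)}
    (hz : ∀ x y, 0 ≤ z.2 x y) : klPayoff (condDensity z.2) z = bayesRisk z := by
  have hterm : ∀ x y, z.2 x y * log (condDensity z.2 x y)
      = z.2 x y * log (z.2 x y / ∑ y', z.2 x y') := by
    intro x y
    by_cases hS : ∑ y', z.2 x y' = 0
    · simp [(sum_eq_zero_iff_of_nonneg fun y' _ => hz x y').mp hS y (mem_univ y)]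
    · rw [condDensity, if_neg hS]
  simp only [klPayoff, bayesRisk, condEntropy, hterm, sum_mul_log_div_sum (hz _),
    sum_sub_distrib]
  ring

theorem klPayoff_le_of_mul_le [Fintype X] {z : ℝ × (X → Y → ℝ)} {q₀ q : X → Y → ℝ}
    {c : ℝ} (hz : ∀ x y, 0 ≤ z.2 x y) (hc : 0 < c)
    (hq₀ : ∀ x y, 0 < z.2 x y → 0 < q₀ x y)
    (hle : ∀ x y, c * q₀ x y ≤ q x y) :
    klPayoff q z ≤ klPayoff q₀ z - (∑ x, ∑ y, z.2 x y) * log c := by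
  have hterm : ∀ x y, z.2 x y * log c + z.2 x y * log (q₀ x y) ≤ z.2 x y * log (q x y) := by
    intro x y
    rcases (hz x y).eq_or_lt with h0 | h0
    · simp [← h0]
    · rw [← mul_add, ← Real.log_mul hc.ne' (hq₀ x y h0).ne']
      exact mul_le_mul_of_nonneg_left (Real.log_le_log (mul_pos hc (hq₀ x y h0)) (hle x y)) h0.le
  have hsum := sum_le_sum fun x (_ : x ∈ univ) => sum_le_sum fun y (_ : y ∈ univ) => hterm x y
  simp only [sum_add_distrib, ← sum_mul] at hsum
  simp only [klPayoff]
  linarith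

theorem exists_mem_densitiesGe_klPayoff_le [Fintype X] [Nonempty Y] {z : ℝ × (X → Y → ℝ)}
    (hz : ∀ x y, 0 ≤ z.2 x y) (hz1 : ∑ x, ∑ y, z.2 x y = 1) {δ : ℝ} (hδ : 0 < δ) :
    ∃ q ∈ densitiesGe ((1 - exp (-δ)) * (Fintype.card Y : ℝ)⁻¹),
      klPayoff q z ≤ bayesRisk z + δ := by
  set c := exp (-δ)
  have hc1 : c ≤ 1 := Real.exp_le_one_iff.mpr (by linarith)
  refine ⟨c • condDensity z.2 + (1 - c) • uniformDensity,
    ⟨fun x y => ?_, fun x => ?_⟩, ?_⟩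
  · simp only [Pi.add_apply, Pi.smul_apply, smul_eq_mul, uniformDensity]
    linarith [mul_nonneg (Real.exp_pos (-δ)).le (condDensity_nonneg hz x y)]
  · simp only [Pi.add_apply, Pi.smul_apply, smul_eq_mul, sum_add_distrib, ← mul_sum,
      sum_condDensity, sum_uniformDensity]
    ring
  · calc klPayoff (c • condDensity z.2 + (1 - c) • uniformDensity) z
        ≤ klPayoff (condDensity z.2) z - (∑ x, ∑ y, z.2 x y) * log c :=
          klPayoff_le_of_mul_le hz (Real.exp_pos _) (fun x y => condDensity_pos hz) fun x y => by
            simp only [Pi.add_apply, Pi.smul_apply, smul_eq_mul]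
            linarith [mul_nonneg (sub_nonneg.2 hc1) (uniformDensity_pos (x := x) (y := y)).le]
      _ = bayesRisk z + δ := by rw [klPayoff_condDensity hz, hz1, Real.log_exp]; ring

end Payoff

section Minimax

variable {X Y : Type*} [Fintype Y]

theorem convex_densitiesGe (ε : ℝ) : Convex ℝ (densitiesGe ε : Set (X → Y → ℝ)) := by
  intro q hq q' hq' a b ha hb hab
  refine ⟨fun x y => ?_, fun x => ?_⟩
  · have hmix := add_le_add (mul_le_mul_of_nonneg_left (hq.1 x y) ha)
      (mul_le_mul_of_nonneg_left (hq'.1 x y) hb)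
    have hε : a * ε + b * ε = ε := by rw [← add_mul, hab, one_mul]
    simp only [Pi.add_apply, Pi.smul_apply, smul_eq_mul]
    linarith
  · simp only [Pi.add_apply, Pi.smul_apply, smul_eq_mul, sum_add_distrib, ← mul_sum, hq.2 x,
      hq'.2 x, hab, mul_one]

theorem isPredDensity_of_mem_densitiesGe {ε : ℝ} (hε : 0 ≤ ε) {q : X → Y → ℝ}
    (hq : q ∈ densitiesGe ε) : IsPredDensity q :=
  ⟨fun x y => ⟨hε.trans (hq.1 x y),
    (single_le_sum (fun y' _ => hε.trans (hq.1 x y')) (mem_univ y)).trans (hq.2 x).le⟩, hq.2⟩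

theorem isCompact_densitiesGe {ε : ℝ} (hε : 0 ≤ ε) :
    IsCompact (densitiesGe ε : Set (X → Y → ℝ)) := by
  have hclosed : IsClosed (densitiesGe ε : Set (X → Y → ℝ)) := by
    simp only [densitiesGe, Set.ofPred_and, Set.ofPred_forall]
    exact (isClosed_iInter fun x => isClosed_iInter fun y =>
      isClosed_le continuous_const (by fun_prop)).inter
        (isClosed_iInter fun x => isClosed_eq (by fun_prop) continuous_const)
  refine (isCompact_univ_pi fun _ => isCompact_univ_pi fun _ => isCompact_Icc
    (a := (0 : ℝ)) (b := 1)).of_isClosed_subset hclosed fun q hq => ?_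
  simp only [Set.mem_pi, Set.mem_univ, forall_const, Set.mem_Icc]
  exact (isPredDensity_of_mem_densitiesGe hε hq).1

theorem convexOn_klPayoff [Fintype X] {z : ℝ × (X → Y → ℝ)} (hz : ∀ x y, 0 ≤ z.2 x y) :
    ConvexOn ℝ {q : X → Y → ℝ | ∀ x y, 0 < q x y} (klPayoff · z) := by
  refine ⟨fun q hq q' hq' a b ha hb hab x y => ?_, fun q hq q' hq' a b ha hb hab => ?_⟩
  · simp only [Pi.add_apply, Pi.smul_apply, smul_eq_mul]
    rcases ha.eq_or_lt with rfl | ha'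
    · rw [zero_add] at hab
      simp [hab, hq' x y]
    · exact add_pos_of_pos_of_nonneg (mul_pos ha' (hq x y)) (mul_nonneg hb (hq' x y).le)
  have hlog : ∀ x y, a * log (q x y) + b * log (q' x y) ≤ log ((a • q + b • q') x y) :=
    fun x y => strictConcaveOn_log_Ioi.concaveOn.2 (hq x y) (hq' x y) ha hb hab
  have hsum := sum_le_sum fun x (_ : x ∈ univ) => sum_le_sum fun y (_ : y ∈ univ) =>
    mul_le_mul_of_nonneg_left (hlog x y) (hz x y)
  simp only [mul_add, sum_add_distrib, mul_left_comm _ a, mul_left_comm _ b, ← mul_sum] at hsum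
  have hz1 : z.1 = a * z.1 + b * z.1 := by rw [← add_mul, hab, one_mul]
  simp only [klPayoff, smul_eq_mul]
  linarith

theorem concaveOn_klPayoff [Fintype X] (q : X → Y → ℝ) :
    ConcaveOn ℝ Set.univ (klPayoff q) := by
  refine ⟨convex_univ, fun z _ z' _ a b _ _ _ => le_of_eq ?_⟩
  simp only [klPayoff, Prod.fst_add, Prod.smul_fst, Prod.snd_add, Prod.smul_snd, Pi.add_apply,
    Pi.smul_apply, smul_eq_mul, add_mul, sum_add_distrib, mul_assoc, ← mul_sum]
  ring

theorem continuous_klPayoff [Fintype X] (q : X → Y → ℝ) : Continuous (klPayoff q) := by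
  unfold klPayoff
  fun_prop

theorem continuousOn_klPayoff [Fintype X] (z : ℝ × (X → Y → ℝ)) :
    ContinuousOn (klPayoff · z) {q : X → Y → ℝ | ∀ x y, 0 < q x y} := by
  unfold klPayoff
  exact continuousOn_const.sub (continuousOn_finsetSum _ fun x _ =>
    continuousOn_finsetSum _ fun y _ => continuousOn_const.mul
      (ContinuousOn.log (by fun_prop) fun q hq => (hq x y).ne'))

theorem iInf_iSup_klPayoff_eq [Fintype X] {H : Set (ℝ × (X → Y → ℝ))} (hH : Convex ℝ H)
    (hH0 : ∀ z ∈ H, ∀ x y, 0 ≤ z.2 x y) {ε : ℝ} (hε : 0 < ε)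
    (hne : (densitiesGe ε : Set (X → Y → ℝ)).Nonempty) :
    ⨅ q ∈ densitiesGe ε, ⨆ z ∈ H, (klPayoff q z : EReal)
      = ⨆ z ∈ H, ⨅ q ∈ densitiesGe ε, (klPayoff q z : EReal) := by
  have hpos : densitiesGe ε ⊆ {q : X → Y → ℝ | ∀ x y, 0 < q x y} :=
    fun q hq x y => hε.trans_le (hq.1 x y)
  refine Sion.minimax' hne (convex_densitiesGe ε) (isCompact_densitiesGe hε.le)
    (fun z _ => ?_) (fun z hz => ?_) hH (fun q _ => ?_) (fun q _ => ?_)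
  · exact (continuous_coe_real_ereal.comp_continuousOn
      ((continuousOn_klPayoff z).mono hpos)).lowerSemicontinuousOn
  · exact ((convexOn_klPayoff (hH0 z hz)).subset hpos (convex_densitiesGe ε)).quasiconvexOn
      |>.monotone_comp (g := Real.toEReal) EReal.coe_strictMono.monotone
  · exact (continuous_coe_real_ereal.comp (continuous_klPayoff q)).continuousOn
      |>.upperSemicontinuousOn
  · exact ((concaveOn_klPayoff q).subset (Set.subset_univ H) hH).quasiconcaveOn
      |>.monotone_comp (g := Real.toEReal) EReal.coe_strictMono.monotone

end Minimax

section Risk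

variable {Θ X Y : Type*} [Fintype X] [Fintype Y]

noncomputable def riskPoint (p : X → Y → Θ → ℝ) (θ : Θ) : ℝ × (X → Y → ℝ) :=
  (-condEntropy fun x y => p x y θ, fun x y => p x y θ)

theorem klTerm_ne_bot (a b c : ℝ) : klTerm a b c ≠ ⊥ := by
  unfold klTerm
  split_ifs
  exacts [EReal.zero_ne_bot, top_ne_bot, EReal.coe_ne_bot _]

theorem klTerm_eq {a b c : ℝ} (h : a ≠ 0 → b ≠ 0 ∧ c ≠ 0) :
    klTerm a b c = ((a * log b - a * log c : ℝ) : EReal) := by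
  by_cases ha : a = 0
  · simp [klTerm, ha]
  · obtain ⟨hb, hc⟩ := h ha
    rw [klTerm, if_neg ha, if_neg hc, Real.log_div hb hc, mul_sub]

theorem risk_eq_klPayoff {p : X → Y → Θ → ℝ} {q : X → Y → ℝ} {θ : Θ}
    (hp : ∀ x y, 0 ≤ p x y θ) (hq : ∀ x y, q x y = 0 → p x y θ = 0) :
    risk p q θ = klPayoff q (riskPoint p θ) := by
  have hterm : ∀ x y, klTerm (p x y θ) (p x y θ / ∑ y', p x y' θ) (q x y) =
      ((p x y θ * log (p x y θ / ∑ y', p x y' θ) - p x y θ * log (q x y) : ℝ) : EReal) := by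
    refine fun x y => klTerm_eq fun h => ⟨div_ne_zero h ?_, fun h' => h (hq x y h')⟩
    exact ((lt_of_le_of_ne (hp x y) (Ne.symm h)).trans_le
      (single_le_sum (fun y' _ => hp x y') (mem_univ y))).ne'
  simp only [risk, hterm, ← EReal.coe_finsetSum]
  congr 1
  simp only [klPayoff, riskPoint, condEntropy, sum_sub_distrib,
    sum_mul_log_div_sum (fun y => hp _ y)]
  ring

theorem risk_eq_top {p : X → Y → Θ → ℝ} {q : X → Y → ℝ} {θ : Θ} {x : X} {y : Y}
    (hq : q x y = 0) (hp : p x y θ ≠ 0) : risk p q θ = ⊤ :=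
  EReal.sum_eq_top_of_ne_bot (fun _ _ => EReal.sum_ne_bot fun _ _ => klTerm_ne_bot _ _ _)
    (mem_univ x) <| EReal.sum_eq_top_of_ne_bot (fun _ _ => klTerm_ne_bot _ _ _) (mem_univ y)
      (by rw [klTerm, if_neg hp, if_pos hq])

theorem continuous_riskPoint [TopologicalSpace Θ] {p : X → Y → Θ → ℝ}
    (hc : ∀ x y, Continuous (p x y)) : Continuous (riskPoint p) := by
  refine Continuous.prodMk ?_ (continuous_pi fun x => continuous_pi fun y => hc x y)
  unfold condEntropy
  fun_prop

end Risk

theorem Continuous.integrable_of_compactSpace {Θ E : Type*} [TopologicalSpace Θ]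
    [CompactSpace Θ] [MeasurableSpace Θ] [OpensMeasurableSpace Θ] [NormedAddCommGroup E]
    {f : Θ → E} (hf : Continuous f) (μ : Measure Θ) [IsFiniteMeasure μ] : Integrable f μ :=
  hf.integrable_of_hasCompactSupport (HasCompactSupport.of_compactSpace f)

theorem exists_probabilityMeasure_integral_eq_sum {Θ ι : Type*} [MeasurableSpace Θ]
    {t : Finset ι} {w : ι → ℝ} (hw : ∀ i ∈ t, 0 ≤ w i) (hw1 : ∑ i ∈ t, w i = 1)
    (θs : ι → Θ) :
    ∃ π : ProbabilityMeasure Θ, ∀ f : Θ → ℝ, StronglyMeasurable f →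
      ∫ θ, f θ ∂(π : Measure Θ) = ∑ i ∈ t, w i * f (θs i) := by
  set μ : Measure Θ := ∑ i ∈ t, ENNReal.ofReal (w i) • Measure.dirac (θs i)
  have hμ : IsProbabilityMeasure μ := by
    constructor
    simp only [μ, Measure.finsetSum_apply, Measure.smul_apply, smul_eq_mul, measure_univ,
      mul_one]
    rw [← ENNReal.ofReal_sum_of_nonneg hw, hw1, ENNReal.ofReal_one]
  refine ⟨⟨μ, hμ⟩, fun f hf => ?_⟩
  have hint : ∀ i ∈ t, Integrable f (ENNReal.ofReal (w i) • Measure.dirac (θs i)) :=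
    fun i _ => ((integrable_const (f (θs i))).congr (ae_eq_dirac' hf.measurable).symm)
      |>.smul_measure ENNReal.ofReal_ne_top
  change ∫ θ, f θ ∂μ = _
  rw [integral_finsetSum_measure hint]
  refine sum_congr rfl fun i hi => ?_
  rw [integral_smul_measure, integral_dirac' f (θs i) hf, ENNReal.toReal_ofReal (hw i hi),
    smul_eq_mul]

theorem pMix_nonneg {Θ X Y : Type*} [MeasurableSpace Θ] {p : X → Y → Θ → ℝ}
    (hnn : ∀ x y θ, 0 ≤ p x y θ) (π : ProbabilityMeasure Θ) (x : X) (y : Y) :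
    0 ≤ pMix p π x y :=
  integral_nonneg (hnn x y)

section MixRiskPoint

variable {Θ X Y : Type*} [Fintype X] [Fintype Y] [MeasurableSpace Θ]

noncomputable def mixRiskPoint (p : X → Y → Θ → ℝ) (π : ProbabilityMeasure Θ) :
    ℝ × (X → Y → ℝ) :=
  (∫ θ, (riskPoint p θ).1 ∂(π : Measure Θ), fun x y => pMix p π x y)

variable [TopologicalSpace Θ] [OpensMeasurableSpace Θ]

theorem exists_mixRiskPoint_eq {p : X → Y → Θ → ℝ} (hc : ∀ x y, Continuous (p x y))
    {z : ℝ × (X → Y → ℝ)} (hz : z ∈ convexHull ℝ (Set.range (riskPoint p))) :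
    ∃ π, mixRiskPoint p π = z := by
  rw [_root_.convexHull_eq] at hz
  obtain ⟨ι, t, w, zs, hw, hw1, hzs, rfl⟩ := hz
  obtain ⟨i, hi⟩ := Finset.nonempty_of_sum_ne_zero (hw1 ▸ one_ne_zero)
  have : Nonempty Θ := ⟨(hzs i hi).choose⟩
  choose! θs hθs using fun i hi => Set.mem_range.mp (hzs i hi)
  obtain ⟨π, hπ⟩ := exists_probabilityMeasure_integral_eq_sum hw hw1 θs
  refine ⟨π, ?_⟩
  rw [Finset.centerMass_eq_of_sum_1 _ _ hw1]
  refine Prod.ext ?_ (funext fun x => funext fun y => ?_)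
  · rw [mixRiskPoint, hπ _ (continuous_riskPoint hc).fst.stronglyMeasurable, Prod.fst_sum]
    exact sum_congr rfl fun i hi => by rw [← hθs i hi]; rfl
  · simp only [mixRiskPoint, pMix]
    rw [hπ _ (hc x y).stronglyMeasurable, Prod.snd_sum, Finset.sum_apply, Finset.sum_apply]
    exact sum_congr rfl fun i hi => by rw [← hθs i hi]; rfl

variable [CompactSpace Θ]

theorem condMutualInfo_eq_bayesRisk {p : X → Y → Θ → ℝ} (hc : ∀ x y, Continuous (p x y))
    (π : ProbabilityMeasure Θ) : condMutualInfo p π = bayesRisk (mixRiskPoint p π) := by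
  have hint : ∀ f : Θ → ℝ, Continuous f → Integrable f (π : Measure Θ) :=
    fun f hf => hf.integrable_of_compactSpace _
  simp only [condMutualInfo, bayesRisk, mixRiskPoint, riskPoint, condEntropy]
  rw [integral_neg, integral_sub (hint _ (by fun_prop)) (hint _ (by fun_prop))]
  ring

theorem klPayoff_mixRiskPoint {p : X → Y → Θ → ℝ} (hc : ∀ x y, Continuous (p x y))
    (q : X → Y → ℝ) (π : ProbabilityMeasure Θ) :
    klPayoff q (mixRiskPoint p π) = ∫ θ, klPayoff q (riskPoint p θ) ∂(π : Measure Θ) := by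
  have hint : ∀ f : Θ → ℝ, Continuous f → Integrable f (π : Measure Θ) :=
    fun f hf => hf.integrable_of_compactSpace _
  simp only [klPayoff, mixRiskPoint, pMix]
  rw [integral_sub (hint _ (continuous_riskPoint hc).fst) (hint _ (by fun_prop))]
  congr 1
  rw [integral_finsetSum _ fun x _ => hint _ (by fun_prop)]
  refine sum_congr rfl fun x _ => ?_
  rw [integral_finsetSum _ fun y _ => hint _ (by fun_prop)]
  simp only [integral_mul_const]
  rfl

theorem sum_sum_pMix {p : X → Y → Θ → ℝ} (hc : ∀ x y, Continuous (p x y))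
    (hsum : ∀ θ, ∑ x, ∑ y, p x y θ = 1) (π : ProbabilityMeasure Θ) :
    ∑ x, ∑ y, pMix p π x y = 1 := by
  have hint : ∀ f : Θ → ℝ, Continuous f → Integrable f (π : Measure Θ) :=
    fun f hf => hf.integrable_of_compactSpace _
  have hrow : ∀ x, ∑ y, pMix p π x y = ∫ θ, ∑ y, p x y θ ∂(π : Measure Θ) := fun x =>
    (integral_finsetSum _ fun y _ => hint _ (hc x y)).symm
  rw [sum_congr rfl fun x _ => hrow x, ← integral_finsetSum _ fun x _ => hint _ (by fun_prop)]
  simp [hsum]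

theorem condMutualInfo_le_of_klPayoff_le {p : X → Y → Θ → ℝ}
    (hc : ∀ x y, Continuous (p x y)) (hnn : ∀ x y θ, 0 ≤ p x y θ) {q : X → Y → ℝ}
    (hq : ∀ x y, 0 ≤ q x y) (hq1 : ∀ x, ∑ y, q x y ≤ 1)
    (hq0 : ∀ x y, q x y = 0 → ∀ θ, p x y θ = 0) {B : ℝ}
    (hB : ∀ θ, klPayoff q (riskPoint p θ) ≤ B) (π : ProbabilityMeasure Θ) :
    condMutualInfo p π ≤ B := by
  have hpos : ∀ x y, 0 < pMix p π x y → 0 < q x y := fun x y hm =>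
    (hq x y).lt_of_ne fun h => hm.ne' (by simp [pMix, hq0 x y h.symm])
  calc condMutualInfo p π = bayesRisk (mixRiskPoint p π) := condMutualInfo_eq_bayesRisk hc π
    _ ≤ klPayoff q (mixRiskPoint p π) := bayesRisk_le_klPayoff (pMix_nonneg hnn π) hq hq1 hpos
    _ = ∫ θ, klPayoff q (riskPoint p θ) ∂(π : Measure Θ) := klPayoff_mixRiskPoint hc q π
    _ ≤ ∫ _, B ∂(π : Measure Θ) :=
        integral_mono (((continuous_klPayoff q).comp (continuous_riskPoint hc))
          |>.integrable_of_compactSpace _) (integrable_const B) hB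
    _ = B := by simp

theorem bddAbove_range_condMutualInfo [Nonempty Y] {p : X → Y → Θ → ℝ}
    (hc : ∀ x y, Continuous (p x y)) (hnn : ∀ x y θ, 0 ≤ p x y θ) :
    BddAbove (Set.range (condMutualInfo p)) := by
  obtain ⟨B, hB⟩ := (isCompact_range ((continuous_klPayoff uniformDensity).comp
    (continuous_riskPoint hc))).bddAbove
  refine ⟨B, Set.forall_mem_range.2 fun π => ?_⟩
  exact condMutualInfo_le_of_klPayoff_le hc hnn (fun _ _ => uniformDensity_pos.le)
    (fun x => (sum_uniformDensity x).le) (fun _ _ h => absurd h uniformDensity_pos.ne')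
    (fun θ => hB ⟨θ, rfl⟩) π

end MixRiskPoint

section Bounds

variable {Θ X Y : Type*} [Fintype X] [Fintype Y] [TopologicalSpace Θ] [CompactSpace Θ]
  [MeasurableSpace Θ] [OpensMeasurableSpace Θ]

theorem iSup_condMutualInfo_le_iSup_risk [Nonempty Θ] {p : X → Y → Θ → ℝ}
    (hc : ∀ x y, Continuous (p x y)) (hnn : ∀ x y θ, 0 ≤ p x y θ) {q : X → Y → ℝ}
    (hq : IsPredDensity q) :
    ((⨆ π, condMutualInfo p π : ℝ) : EReal) ≤ ⨆ θ, risk p q θ := by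
  have : Nonempty (ProbabilityMeasure Θ) :=
    ⟨⟨Measure.dirac (Classical.arbitrary Θ), inferInstance⟩⟩
  by_cases hq0 : ∀ x y, q x y = 0 → ∀ θ, p x y θ = 0
  · refine EReal.le_of_forall_lt_iff_le.mp fun r hr =>
      EReal.coe_le_coe_iff.mpr (ciSup_le fun π => ?_)
    refine condMutualInfo_le_of_klPayoff_le hc hnn (fun x y => (hq.1 x y).1)
      (fun x => (hq.2 x).le) hq0 (fun θ => ?_) π
    have hθ := (le_iSup (risk p q) θ).trans_lt hr
    rw [risk_eq_klPayoff (hnn · · θ) fun x y h => hq0 x y h θ, EReal.coe_lt_coe_iff] at hθ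
    exact hθ.le
  · push Not at hq0
    obtain ⟨x, y, hqxy, θ, hp⟩ := hq0
    exact le_iSup_of_le θ (le_top.trans_eq (risk_eq_top hqxy hp).symm)

theorem iInf_iSup_risk_le [Nonempty Y] {p : X → Y → Θ → ℝ}
    (hc : ∀ x y, Continuous (p x y)) (hnn : ∀ x y θ, 0 ≤ p x y θ)
    (hsum : ∀ θ, ∑ x, ∑ y, p x y θ = 1) {δ : ℝ} (hδ : 0 < δ) :
    ⨅ q : {q : X → Y → ℝ // IsPredDensity q}, ⨆ θ, risk p q.1 θ
      ≤ (((⨆ π, condMutualInfo p π) + δ : ℝ) : EReal) := by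
  set ε := (1 - Real.exp (-δ)) * (Fintype.card Y : ℝ)⁻¹
  set H := convexHull ℝ (Set.range (riskPoint p))
  have hε : 0 < ε :=
    mul_pos (sub_pos.2 (Real.exp_lt_one_iff.mpr (neg_neg_of_pos hδ))) (by positivity)
  have hne : (densitiesGe ε : Set (X → Y → ℝ)).Nonempty :=
    ⟨uniformDensity, fun _ _ => mul_le_of_le_one_left (by positivity)
      (by linarith [Real.exp_pos (-δ)]), sum_uniformDensity⟩
  have hH0 : ∀ z ∈ H, ∀ x y, 0 ≤ z.2 x y := fun z hz => by
    obtain ⟨π, rfl⟩ := exists_mixRiskPoint_eq hc hz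
    exact pMix_nonneg hnn π
  calc ⨅ q : {q : X → Y → ℝ // IsPredDensity q}, ⨆ θ, risk p q.1 θ
      ≤ ⨅ q ∈ densitiesGe ε, ⨆ z ∈ H, (klPayoff q z : EReal) :=
        le_iInf₂ fun q hq => iInf_le_of_le ⟨q, isPredDensity_of_mem_densitiesGe hε.le hq⟩
          (iSup_le fun θ => ?_)
    _ = ⨆ z ∈ H, ⨅ q ∈ densitiesGe ε, (klPayoff q z : EReal) :=
        iInf_iSup_klPayoff_eq (convex_convexHull ℝ _) hH0 hε hne
    _ ≤ _ := iSup₂_le fun z hz => ?_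
  · rw [risk_eq_klPayoff (hnn · · θ) fun x y h => absurd h (hε.trans_le (hq.1 x y)).ne']
    exact le_iSup₂_of_le (riskPoint p θ) (subset_convexHull ℝ _ (Set.mem_range_self θ)) le_rfl
  · obtain ⟨π, rfl⟩ := exists_mixRiskPoint_eq hc hz
    obtain ⟨q, hq, hle⟩ :=
      exists_mem_densitiesGe_klPayoff_le (z := mixRiskPoint p π) (pMix_nonneg hnn π)
        (sum_sum_pMix hc hsum π) hδ
    refine iInf₂_le_of_le q hq (EReal.coe_le_coe_iff.mpr (hle.trans ?_))
    rw [← condMutualInfo_eq_bayesRisk hc]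
    gcongr
    exact le_ciSup (bddAbove_range_condMutualInfo hc hnn) π

end Bounds

/-- The minimax value of the KL prediction problem equals the maximal conditional mutual
information: `inf_q sup_θ R(θ,q) = sup_π I_{θ,y|x}(π)`. -/
theorem minimax_value_eq_sup_condMutualInfo
    {Θ X Y : Type*} [MetricSpace Θ] [CompactSpace Θ] [Nonempty Θ]
    [MeasurableSpace Θ] [BorelSpace Θ] [Fintype X] [Fintype Y]
    (p : X → Y → Θ → ℝ)
    (hc : ∀ x y, Continuous (p x y))
    (hnn : ∀ x y θ, 0 ≤ p x y θ)
    (hsum : ∀ θ : Θ, ∑ x : X, ∑ y : Y, p x y θ = 1) :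
    (⨅ q : {q : X → Y → ℝ // IsPredDensity q}, ⨆ θ : Θ, risk p q.val θ)
      = (((⨆ π : ProbabilityMeasure Θ, condMutualInfo p π : ℝ)) : EReal) := by
  have : Nonempty Y := by
    obtain ⟨x, -, hx⟩ := exists_ne_zero_of_sum_ne_zero
      ((hsum (Classical.arbitrary Θ)).symm ▸ one_ne_zero)
    obtain ⟨y, -, -⟩ := exists_ne_zero_of_sum_ne_zero hx
    exact ⟨y⟩
  refine le_antisymm (EReal.le_of_forall_lt_iff_le.mp fun r hr => ?_)
    (le_iInf fun q => iSup_condMutualInfo_le_iSup_risk hc hnn q.2)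
  simpa using iInf_iSup_risk_le hc hnn hsum (sub_pos.2 (EReal.coe_lt_coe_iff.mp hr))
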